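/- arXiv:1707.09710 — 2 statements merged into one kernel-verified Lean document; each statement's English description precedes it below -/
import Mathlib

section
/- Let n ≥ 1 and A ≥ 0. There exists a constant C > 0 (depending only on n and A) such that for all k, m ∈ ℤⁿ, ((1+|k|)^A + (1+|m|)^A) · |k − m| ≤ C · |(1+|k|)^A k − (1+|m|)^A m|. -/
noncomputable def toE {n : ℕ} (k : Fin n → ℤ) : EuclideanSpace ℝ (Fin n) := WithLp.toLp 2 (fun i => (k i : ℝ))

/-!
Write `a = (1 + ‖x‖) ^ A` and `b = (1 + ‖y‖) ^ A` with `‖y‖ ≤ ‖x‖`, so `b ≤ a`. Expanding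
`⟪a • x - b • y, x - y⟫ = b ‖x - y‖² + (a - b) ⟪x, x - y⟫` and using `⟪x, x - y⟫ ≥ 0` gives
`b ‖x - y‖ ≤ ‖a • x - b • y‖`, which suffices when `‖x‖ ≤ 2 ‖y‖`, because then `a ≤ 2 ^ A b`.
When `‖x‖ > 2 ‖y‖` the term `a • x` dominates: `‖a • x - b • y‖ ≥ a ‖x‖ / 2` while
`(a + b) ‖x - y‖ ≤ 3 a ‖x‖`.
-/

section Weight

variable {E : Type*} [SeminormedAddCommGroup E]

theorem one_add_norm_rpow_le_of_le {A : ℝ} (hA : 0 ≤ A) {x y : E} (h : ‖y‖ ≤ ‖x‖) :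
    (1 + ‖y‖) ^ A ≤ (1 + ‖x‖) ^ A :=
  Real.rpow_le_rpow (by positivity) (by linarith) hA

theorem one_add_norm_rpow_le_two_rpow_mul {A : ℝ} (hA : 0 ≤ A) {x y : E} (h : ‖x‖ ≤ 2 * ‖y‖) :
    (1 + ‖x‖) ^ A ≤ 2 ^ A * (1 + ‖y‖) ^ A := by
  rw [← Real.mul_rpow zero_le_two (by positivity)]
  exact Real.rpow_le_rpow (by positivity) (by linarith) hA

end Weight

section InnerProductSpace

open RealInnerProductSpace

variable {E : Type*} [NormedAddCommGroup E] [InnerProductSpace ℝ E]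

theorem mul_norm_sub_le_norm_smul_sub_smul {x y : E} {a b : ℝ} (hba : b ≤ a)
    (hyx : ‖y‖ ≤ ‖x‖) : b * ‖x - y‖ ≤ ‖a • x - b • y‖ := by
  rcases eq_or_ne x y with rfl | hne
  · simp
  have hpos : 0 < ‖x - y‖ := norm_pos_iff.mpr (sub_ne_zero.mpr hne)
  have hsplit : ⟪a • x - b • y, x - y⟫ = b * ‖x - y‖ ^ 2 + (a - b) * ⟪x, x - y⟫ := by
    simp only [inner_sub_left, inner_sub_right, real_inner_smul_left, real_inner_self_eq_norm_sq,
      norm_sub_sq_real, real_inner_comm x y]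
    ring
  have hxxy : 0 ≤ ⟪x, x - y⟫ := by
    rw [inner_sub_right, real_inner_self_eq_norm_sq]
    nlinarith [real_inner_le_norm x y, norm_nonneg y]
  have hcoerc : b * ‖x - y‖ * ‖x - y‖ ≤ ‖a • x - b • y‖ * ‖x - y‖ :=
    calc b * ‖x - y‖ * ‖x - y‖ ≤ ⟪a • x - b • y, x - y⟫ := by
          rw [hsplit]; nlinarith [mul_nonneg (sub_nonneg.mpr hba) hxxy]
      _ ≤ ‖a • x - b • y‖ * ‖x - y‖ := real_inner_le_norm _ _
  exact le_of_mul_le_mul_right hcoerc hpos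

theorem add_mul_norm_sub_le_of_two_mul_norm_le {x y : E} {a b : ℝ} (hb : 0 ≤ b) (hba : b ≤ a)
    (hyx : 2 * ‖y‖ ≤ ‖x‖) : (a + b) * ‖x - y‖ ≤ 6 * ‖a • x - b • y‖ := by
  have ha : 0 ≤ a := hb.trans hba
  have hlow : a * ‖x‖ - b * ‖y‖ ≤ ‖a • x - b • y‖ := by
    simpa only [norm_smul, Real.norm_of_nonneg ha, Real.norm_of_nonneg hb]
      using norm_sub_norm_le (a • x) (b • y)
  have hby : b * ‖y‖ ≤ a * ‖x‖ / 2 := by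
    nlinarith [mul_le_mul hba (le_refl ‖y‖) (norm_nonneg y) ha]
  calc (a + b) * ‖x - y‖ ≤ (2 * a) * (‖x‖ + ‖y‖) :=
        mul_le_mul (by linarith) (norm_sub_le x y) (norm_nonneg _) (by linarith)
    _ ≤ 6 * (a * ‖x‖ / 2) := by nlinarith [mul_le_mul_of_nonneg_left hyx ha]
    _ ≤ 6 * ‖a • x - b • y‖ := by linarith

theorem add_rpow_mul_norm_sub_le_of_norm_le {A : ℝ} (hA : 0 ≤ A) {x y : E} (hyx : ‖y‖ ≤ ‖x‖) :
    ((1 + ‖x‖) ^ A + (1 + ‖y‖) ^ A) * ‖x - y‖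
      ≤ (2 ^ A + 6) * ‖(1 + ‖x‖) ^ A • x - (1 + ‖y‖) ^ A • y‖ := by
  set a := (1 + ‖x‖) ^ A
  set b := (1 + ‖y‖) ^ A
  have hb : 0 ≤ b := by positivity
  have hba : b ≤ a := one_add_norm_rpow_le_of_le hA hyx
  have h2A : 1 ≤ (2 : ℝ) ^ A := Real.one_le_rpow one_le_two hA
  rcases le_total ‖x‖ (2 * ‖y‖) with hnear | hfar
  · have hab : a ≤ 2 ^ A * b := one_add_norm_rpow_le_two_rpow_mul hA hnear
    have hcoerc := mul_norm_sub_le_norm_smul_sub_smul (a := a) hba hyx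
    calc (a + b) * ‖x - y‖ ≤ (2 ^ A + 1) * (b * ‖x - y‖) := by
          nlinarith [mul_le_mul_of_nonneg_right hab (norm_nonneg (x - y))]
      _ ≤ (2 ^ A + 1) * ‖a • x - b • y‖ := by gcongr
      _ ≤ (2 ^ A + 6) * ‖a • x - b • y‖ := by gcongr; norm_num
  · calc (a + b) * ‖x - y‖ ≤ 6 * ‖a • x - b • y‖ :=
          add_mul_norm_sub_le_of_two_mul_norm_le hb hba hfar
      _ ≤ (2 ^ A + 6) * ‖a • x - b • y‖ := by gcongr; linarith

theorem add_rpow_mul_norm_sub_le {A : ℝ} (hA : 0 ≤ A) (x y : E) :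
    ((1 + ‖x‖) ^ A + (1 + ‖y‖) ^ A) * ‖x - y‖
      ≤ (2 ^ A + 6) * ‖(1 + ‖x‖) ^ A • x - (1 + ‖y‖) ^ A • y‖ := by
  rcases le_total ‖y‖ ‖x‖ with h | h
  · exact add_rpow_mul_norm_sub_le_of_norm_le hA h
  · simpa only [add_comm ((1 + ‖x‖) ^ A), norm_sub_rev x, norm_sub_rev ((1 + ‖x‖) ^ A • x)]
      using add_rpow_mul_norm_sub_le_of_norm_le hA h

end InnerProductSpace

theorem stmt0_general (n : ℕ) (A : ℝ) (hA : 0 ≤ A) :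
    ∃ C > (0 : ℝ), ∀ k m : Fin n → ℤ,
      ((1 + ‖toE k‖) ^ A + (1 + ‖toE m‖) ^ A) * ‖toE k - toE m‖
        ≤ C * ‖(1 + ‖toE k‖) ^ A • toE k - (1 + ‖toE m‖) ^ A • toE m‖ :=
  ⟨2 ^ A + 6, by positivity, fun k m => add_rpow_mul_norm_sub_le hA (toE k) (toE m)⟩

theorem stmt0 (n : ℕ) (hn : 1 ≤ n) (A : ℝ) (hA : 0 ≤ A) :
    ∃ C > (0 : ℝ), ∀ k m : Fin n → ℤ,
      ((1 + ‖toE k‖) ^ A + (1 + ‖toE m‖) ^ A) * ‖toE k - toE m‖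
        ≤ C * ‖(1 + ‖toE k‖) ^ A • toE k - (1 + ‖toE m‖) ^ A • toE m‖ :=
  stmt0_general n A hA
end

section
/- Let A ≥ 0, C > 0, and for k ∈ ℤⁿ set B_k = {ξ ∈ ℝⁿ : |ξ − (1+|k|)^A k| ≤ C(1+|k|)^A}. Suppose k, ℓ ∈ ℤⁿ satisfy B_k ∩ B_ℓ ≠ ∅. Then there exists a constant C'' > 0 depending only on A and C such that |k − ℓ| ≤ C'' and B_k ⊂ {ξ ∈ ℝⁿ : |ξ − (1+|ℓ|)^A ℓ| ≤ C''(1+|ℓ|)^A}. -/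
open Metric
open scoped RealInnerProductSpace

theorem one_add_rpow_sub_mul_sub_nonneg {A s t : ℝ} (hA : 0 ≤ A) (hs : 0 ≤ s) (ht : 0 ≤ t) :
    0 ≤ ((1 + s) ^ A - (1 + t) ^ A) * (s - t) := by
  rcases le_total s t with hst | hst
  · have : (1 + s) ^ A ≤ (1 + t) ^ A := Real.rpow_le_rpow (by linarith) (by linarith) hA
    exact mul_nonneg_of_nonpos_of_nonpos (by linarith) (by linarith)
  · have : (1 + t) ^ A ≤ (1 + s) ^ A := Real.rpow_le_rpow (by linarith) (by linarith) hA
    exact mul_nonneg (by linarith) (by linarith)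

theorem one_add_norm_rpow_le_of_norm_sub_le {E : Type*} [SeminormedAddCommGroup E]
    {A D : ℝ} {x y : E} (hA : 0 ≤ A) (hxy : ‖x - y‖ ≤ D) :
    (1 + ‖x‖) ^ A ≤ (1 + D) ^ A * (1 + ‖y‖) ^ A := by
  have hD : 0 ≤ D := (norm_nonneg _).trans hxy
  have hy : 0 ≤ ‖y‖ := norm_nonneg y
  have hx : 1 + ‖x‖ ≤ (1 + D) * (1 + ‖y‖) := by
    nlinarith [norm_sub_norm_le x y, mul_nonneg hD hy]
  rw [← Real.mul_rpow (by linarith) (by linarith)]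
  exact Real.rpow_le_rpow (by positivity) hx hA

section InnerProductSpace

variable {E : Type*} [NormedAddCommGroup E] [InnerProductSpace ℝ E]

theorem two_mul_inner_smul_sub_smul_sub (α β : ℝ) (x y : E) :
    2 * ⟪α • x - β • y, x - y⟫ = (α + β) * ‖x - y‖ ^ 2 + (α - β) * (‖x‖ ^ 2 - ‖y‖ ^ 2) := by
  rw [norm_sub_sq_real, inner_sub_left, real_inner_smul_left, real_inner_smul_left,
    inner_sub_right, inner_sub_right, real_inner_self_eq_norm_sq, real_inner_self_eq_norm_sq,
    real_inner_comm x y]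
  ring

theorem add_mul_norm_sub_le_two_mul_norm_smul_sub_smul {α β : ℝ} {x y : E}
    (h : 0 ≤ (α - β) * (‖x‖ - ‖y‖)) :
    (α + β) * ‖x - y‖ ≤ 2 * ‖α • x - β • y‖ := by
  rcases (norm_nonneg (x - y)).eq_or_lt with h0 | h0
  · rw [← h0, mul_zero]
    positivity
  have hsq : 0 ≤ (α - β) * (‖x‖ ^ 2 - ‖y‖ ^ 2) := by
    have : ‖x‖ ^ 2 - ‖y‖ ^ 2 = (‖x‖ - ‖y‖) * (‖x‖ + ‖y‖) := by ring
    rw [this, ← mul_assoc]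
    positivity
  refine le_of_mul_le_mul_right ?_ h0
  calc (α + β) * ‖x - y‖ * ‖x - y‖
      ≤ (α + β) * ‖x - y‖ ^ 2 + (α - β) * (‖x‖ ^ 2 - ‖y‖ ^ 2) := by nlinarith
    _ = 2 * ⟪α • x - β • y, x - y⟫ := (two_mul_inner_smul_sub_smul_sub α β x y).symm
    _ ≤ 2 * ‖α • x - β • y‖ * ‖x - y‖ := by
        rw [mul_assoc]
        gcongr
        exact real_inner_le_norm _ _

variable {A C : ℝ}

theorem norm_sub_le_of_weighted_closedBall_inter_nonempty (hA : 0 ≤ A) {x y : E}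
    (h : (closedBall ((1 + ‖x‖) ^ A • x) (C * (1 + ‖x‖) ^ A) ∩
      closedBall ((1 + ‖y‖) ^ A • y) (C * (1 + ‖y‖) ^ A)).Nonempty) :
    ‖x - y‖ ≤ 2 * C := by
  set α := (1 + ‖x‖) ^ A
  set β := (1 + ‖y‖) ^ A
  have hα : 0 < α := by positivity
  have hβ : 0 < β := by positivity
  have hcenters : ‖α • x - β • y‖ ≤ C * α + C * β := by
    simpa [dist_eq_norm] using dist_le_add_of_nonempty_closedBall_inter_closedBall h
  have hlower : (α + β) * ‖x - y‖ ≤ 2 * ‖α • x - β • y‖ :=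
    add_mul_norm_sub_le_two_mul_norm_smul_sub_smul
      (one_add_rpow_sub_mul_sub_nonneg hA (norm_nonneg x) (norm_nonneg y))
  refine le_of_mul_le_mul_left ?_ (add_pos hα hβ)
  linarith

theorem closedBall_subset_of_weighted_closedBall_inter_nonempty (hA : 0 ≤ A) {x y : E}
    (h : (closedBall ((1 + ‖x‖) ^ A • x) (C * (1 + ‖x‖) ^ A) ∩
      closedBall ((1 + ‖y‖) ^ A • y) (C * (1 + ‖y‖) ^ A)).Nonempty) :
    closedBall ((1 + ‖x‖) ^ A • x) (C * (1 + ‖x‖) ^ A) ⊆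
      closedBall ((1 + ‖y‖) ^ A • y) (3 * C * (1 + 2 * C) ^ A * (1 + ‖y‖) ^ A) := by
  have hC : 0 ≤ C := by
    obtain ⟨ξ, hξ, -⟩ := h
    have hα : 0 < (1 + ‖x‖) ^ A := by positivity
    exact nonneg_of_mul_nonneg_left (dist_nonneg.trans hξ) hα
  have hcenters := dist_le_add_of_nonempty_closedBall_inter_closedBall h
  have hαβ := one_add_norm_rpow_le_of_norm_sub_le hA
    (norm_sub_le_of_weighted_closedBall_inter_nonempty hA h)
  have hβ : (1 + ‖y‖) ^ A ≤ (1 + 2 * C) ^ A * (1 + ‖y‖) ^ A :=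
    le_mul_of_one_le_left (by positivity) (Real.one_le_rpow (by linarith) hA)
  intro ξ hξ
  rw [mem_closedBall] at hξ ⊢
  calc dist ξ ((1 + ‖y‖) ^ A • y)
      ≤ dist ξ ((1 + ‖x‖) ^ A • x) + dist ((1 + ‖x‖) ^ A • x) ((1 + ‖y‖) ^ A • y) :=
        dist_triangle _ _ _
    _ ≤ C * (1 + ‖x‖) ^ A + (C * (1 + ‖x‖) ^ A + C * (1 + ‖y‖) ^ A) := add_le_add hξ hcenters
    _ ≤ 3 * C * (1 + 2 * C) ^ A * (1 + ‖y‖) ^ A := by nlinarith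

end InnerProductSpace

theorem stmt13 (n : ℕ) (A C : ℝ) (hA : 0 ≤ A) (hC : 0 < C) :
    ∃ C'' > (0 : ℝ), ∀ k ℓ : Fin n → ℤ,
      (Metric.closedBall ((1 + ‖toE k‖) ^ A • toE k) (C * (1 + ‖toE k‖) ^ A) ∩
        Metric.closedBall ((1 + ‖toE ℓ‖) ^ A • toE ℓ) (C * (1 + ‖toE ℓ‖) ^ A)).Nonempty →
      ‖toE k - toE ℓ‖ ≤ C'' ∧
      Metric.closedBall ((1 + ‖toE k‖) ^ A • toE k) (C * (1 + ‖toE k‖) ^ A) ⊆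
        {ξ : EuclideanSpace ℝ (Fin n) | ‖ξ - (1 + ‖toE ℓ‖) ^ A • toE ℓ‖ ≤ C'' * (1 + ‖toE ℓ‖) ^ A} := by
  have hgrowth : 1 ≤ (1 + 2 * C) ^ A := Real.one_le_rpow (by linarith) hA
  refine ⟨3 * C * (1 + 2 * C) ^ A, by positivity, fun k ℓ h => ⟨?_, fun ξ hξ => ?_⟩⟩
  · have := norm_sub_le_of_weighted_closedBall_inter_nonempty hA h
    nlinarith
  · exact mem_closedBall_iff_norm.mp
      (closedBall_subset_of_weighted_closedBall_inter_nonempty hA h hξ)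
end
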